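/- arXiv:1810.09212 — 7 statements merged into one kernel-verified Lean document; each statement's English description precedes it below -/
import Mathlib

section
/- Let ε > 0 and T > 0. Suppose u : ℝ × ℝ² → ℝ is infinitely differentiable, and set w(t,x) = −ε²Δu(t,x) + f(u(t,x)) (Laplacian in the space variable). Assume that ∂ₜu(t,x) = Δw(t,x) for all t ∈ [0,T] and x in the closure of Ω, and that ∂ₙw(t,·) = 0 at every point of the four open edges of ∂Ω for every t ∈ [0,T]. Then the total mass t ↦ ∫_Ω u(t,x) dx is constant on [0,T]. -/
/-!
Differentiating under the integral sign, with `∂ₜu` dominated by its maximum on a compact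
neighbourhood, gives `d/dt ∫_Ω u = ∫_Ω ∂ₜu = ∫_Ω Δw`. By Fubini and the fundamental theorem
of calculus in each variable, `∫_Ω ∂ₓₓw = ∫₀¹ (∂ₓw(1,y) - ∂ₓw(0,y)) dy`, which vanishes by the
Neumann condition on the vertical edges, and likewise for `∂ᵧᵧw`. So the mass has derivative zero
on `[0,T]`; the `C²` regularity of `w` this needs comes from `w = -ε²Δu + f(u)`.
-/

open MeasureTheory Set

/-- Partial derivative in the `x` direction. -/
noncomputable def pdx (φ : ℝ × ℝ → ℝ) (p : ℝ × ℝ) : ℝ := fderiv ℝ φ p (1, 0)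

/-- Partial derivative in the `y` direction. -/
noncomputable def pdy (φ : ℝ × ℝ → ℝ) (p : ℝ × ℝ) : ℝ := fderiv ℝ φ p (0, 1)

/-- Laplacian in the space variables. -/
noncomputable def lap (φ : ℝ × ℝ → ℝ) (p : ℝ × ℝ) : ℝ := pdx (pdx φ) p + pdy (pdy φ) p

/-- The open unit square `Ω = (0,1) × (0,1)`. -/
def unitSq : Set (ℝ × ℝ) := Ioo (0:ℝ) 1 ×ˢ Ioo (0:ℝ) 1

/-- The double well potential `F(s) = (1/4)(s²-1)²`. -/
noncomputable def F (s : ℝ) : ℝ := (1/4) * (s^2 - 1)^2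

/-- `f = F'`, i.e. `f(s) = s³ - s`. -/
noncomputable def fDW (s : ℝ) : ℝ := s^3 - s

/-- Time derivative `∂ₜ u`. -/
noncomputable def dtu (u : ℝ → ℝ × ℝ → ℝ) (t : ℝ) (p : ℝ × ℝ) : ℝ :=
  deriv (fun s => u s p) t

/-- The vanishing of the outward normal derivative of `φ` at every point of the four
open edges of `∂Ω` (on `{0}×(0,1)` and `{1}×(0,1)` it is `∓∂φ/∂x`, on `(0,1)×{0}`
and `(0,1)×{1}` it is `∓∂φ/∂y`). -/
def ZeroNormalDeriv (φ : ℝ × ℝ → ℝ) : Prop :=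
  (∀ y ∈ Ioo (0:ℝ) 1, -pdx φ (0, y) = 0 ∧ pdx φ (1, y) = 0) ∧
  (∀ x ∈ Ioo (0:ℝ) 1, -pdy φ (x, 0) = 0 ∧ pdy φ (x, 1) = 0)

section SliceDerivatives

variable {E G : Type*} [NormedAddCommGroup E] [NormedSpace ℝ E]
  [NormedAddCommGroup G] [NormedSpace ℝ G]

theorem DifferentiableAt.hasDerivAt_comp_prodMk_left {φ : ℝ × E → G} {x : ℝ} {y : E}
    (h : DifferentiableAt ℝ φ (x, y)) :
    HasDerivAt (fun s => φ (s, y)) (fderiv ℝ φ (x, y) (1, 0)) x :=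
  h.hasFDerivAt.comp_hasDerivAt x ((hasDerivAt_id x).prodMk (hasDerivAt_const x y))

theorem DifferentiableAt.hasDerivAt_comp_prodMk_right {φ : E × ℝ → G} {x : E} {y : ℝ}
    (h : DifferentiableAt ℝ φ (x, y)) :
    HasDerivAt (fun s => φ (x, s)) (fderiv ℝ φ (x, y) (0, 1)) y :=
  h.hasFDerivAt.comp_hasDerivAt y ((hasDerivAt_const y x).prodMk (hasDerivAt_id y))

end SliceDerivatives

theorem ContDiff.pdx {φ : ℝ × ℝ → ℝ} {m n : WithTop ℕ∞} (h : ContDiff ℝ n φ) (hmn : m + 1 ≤ n) :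
    ContDiff ℝ m (pdx φ) :=
  (h.fderiv_right hmn).clm_apply contDiff_const

theorem ContDiff.pdy {φ : ℝ × ℝ → ℝ} {m n : WithTop ℕ∞} (h : ContDiff ℝ n φ) (hmn : m + 1 ≤ n) :
    ContDiff ℝ m (pdy φ) :=
  (h.fderiv_right hmn).clm_apply contDiff_const

theorem ContDiff.lap {φ : ℝ × ℝ → ℝ} {m n : WithTop ℕ∞} (h : ContDiff ℝ n φ) (hmn : m + 2 ≤ n) :
    ContDiff ℝ m (lap φ) := by
  rw [← one_add_one_eq_two, ← add_assoc] at hmn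
  exact ((h.pdx hmn).pdx le_rfl).add ((h.pdy hmn).pdy le_rfl)

theorem contDiff_fDW {n : WithTop ℕ∞} : ContDiff ℝ n fDW :=
  (contDiff_id.pow 3).sub contDiff_id

theorem Bornology.IsBounded.integrableOn_of_continuous {X E : Type*} [MetricSpace X]
    [ProperSpace X] [MeasurableSpace X] [OpensMeasurableSpace X] {μ : Measure X}
    [IsFiniteMeasureOnCompacts μ] [NormedAddCommGroup E] {s : Set X} (hs : Bornology.IsBounded s)
    {φ : X → E} (h : Continuous φ) : IntegrableOn φ s μ :=
  (h.continuousOn.integrableOn_compact hs.isCompact_closure).mono_set subset_closure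

theorem isBounded_unitSq : Bornology.IsBounded unitSq :=
  (Metric.isBounded_Ioo 0 1).prod (Metric.isBounded_Ioo 0 1)

theorem volume_restrict_unitSq :
    volume.restrict unitSq =
      (volume.restrict (Ioo (0:ℝ) 1)).prod (volume.restrict (Ioo (0:ℝ) 1)) := by
  rw [unitSq, Measure.volume_eq_prod, Measure.prod_restrict]

theorem integral_Ioo_deriv_eq_sub_of_contDiff {g : ℝ → ℝ} (hg : ContDiff ℝ 1 g) {a b : ℝ}
    (hab : a ≤ b) : ∫ x in Ioo a b, deriv g x = g b - g a := by
  rw [← integral_Ioc_eq_integral_Ioo, ← intervalIntegral.integral_of_le hab]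
  exact intervalIntegral.integral_deriv_eq_sub (fun x _ => hg.differentiable one_ne_zero x)
    ((hg.continuous_deriv le_rfl).intervalIntegrable a b)

theorem setIntegral_unitSq_pdx {ψ : ℝ × ℝ → ℝ} (hψ : ContDiff ℝ 1 ψ) :
    ∫ p in unitSq, pdx ψ p = ∫ y in Ioo (0:ℝ) 1, (ψ (1, y) - ψ (0, y)) := by
  have hint : Integrable (pdx ψ) (volume.restrict unitSq) :=
    isBounded_unitSq.integrableOn_of_continuous (hψ.pdx (m := 0) le_rfl).continuous
  rw [volume_restrict_unitSq] at hint ⊢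
  rw [integral_prod_symm _ hint]
  refine setIntegral_congr_fun measurableSet_Ioo fun y _ => ?_
  have hslice : ∀ x, pdx ψ (x, y) = deriv (fun s => ψ (s, y)) x := fun x =>
    ((hψ.differentiable one_ne_zero (x, y)).hasDerivAt_comp_prodMk_left).deriv.symm
  simp only [hslice]
  exact integral_Ioo_deriv_eq_sub_of_contDiff (hψ.comp (contDiff_id.prodMk contDiff_const)) zero_le_one

theorem setIntegral_unitSq_pdy {ψ : ℝ × ℝ → ℝ} (hψ : ContDiff ℝ 1 ψ) :
    ∫ p in unitSq, pdy ψ p = ∫ x in Ioo (0:ℝ) 1, (ψ (x, 1) - ψ (x, 0)) := by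
  have hint : Integrable (pdy ψ) (volume.restrict unitSq) :=
    isBounded_unitSq.integrableOn_of_continuous (hψ.pdy (m := 0) le_rfl).continuous
  rw [volume_restrict_unitSq] at hint ⊢
  rw [integral_prod _ hint]
  refine setIntegral_congr_fun measurableSet_Ioo fun x _ => ?_
  have hslice : ∀ y, pdy ψ (x, y) = deriv (fun s => ψ (x, s)) y := fun y =>
    ((hψ.differentiable one_ne_zero (x, y)).hasDerivAt_comp_prodMk_right).deriv.symm
  simp only [hslice]
  exact integral_Ioo_deriv_eq_sub_of_contDiff (hψ.comp (contDiff_const.prodMk contDiff_id)) zero_le_one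

theorem setIntegral_unitSq_lap_eq_zero {φ : ℝ × ℝ → ℝ} (h : ContDiff ℝ 2 φ)
    (hφ : ZeroNormalDeriv φ) : ∫ p in unitSq, lap φ p = 0 := by
  have hx : ContDiff ℝ 1 (pdx φ) := h.pdx (by norm_num)
  have hy : ContDiff ℝ 1 (pdy φ) := h.pdy (by norm_num)
  have hxx_int : IntegrableOn (pdx (pdx φ)) unitSq :=
    isBounded_unitSq.integrableOn_of_continuous (hx.pdx (m := 0) le_rfl).continuous
  have hyy_int : IntegrableOn (pdy (pdy φ)) unitSq :=
    isBounded_unitSq.integrableOn_of_continuous (hy.pdy (m := 0) le_rfl).continuous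
  have hx_flux : ∫ y in Ioo (0:ℝ) 1, (pdx φ (1, y) - pdx φ (0, y)) = 0 := by
    refine (setIntegral_congr_fun measurableSet_Ioo fun y hy => ?_).trans (integral_zero _ _)
    simp [(hφ.1 y hy).2, neg_eq_zero.mp (hφ.1 y hy).1]
  have hy_flux : ∫ x in Ioo (0:ℝ) 1, (pdy φ (x, 1) - pdy φ (x, 0)) = 0 := by
    refine (setIntegral_congr_fun measurableSet_Ioo fun x hx => ?_).trans (integral_zero _ _)
    simp [(hφ.2 x hx).2, neg_eq_zero.mp (hφ.2 x hx).1]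
  unfold lap
  rw [integral_add hxx_int hyy_int, setIntegral_unitSq_pdx hx, setIntegral_unitSq_pdy hy,
    hx_flux, hy_flux, add_zero]

section TimeDerivative

variable {u : ℝ → ℝ × ℝ → ℝ}

theorem hasDerivAt_dtu (hu : ContDiff ℝ 1 (Function.uncurry u)) (t : ℝ) (p : ℝ × ℝ) :
    HasDerivAt (fun s => u s p) (dtu u t p) t :=
  ((hu.differentiable one_ne_zero (t, p)).hasDerivAt_comp_prodMk_left).differentiableAt.hasDerivAt

theorem continuous_uncurry_dtu (hu : ContDiff ℝ 1 (Function.uncurry u)) :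
    Continuous (Function.uncurry (dtu u)) := by
  have hdtu : Function.uncurry (dtu u) = fun z => fderiv ℝ (Function.uncurry u) z (1, 0) :=
    funext fun z => ((hu.differentiable one_ne_zero z).hasDerivAt_comp_prodMk_left).deriv
  rw [hdtu]
  exact (hu.continuous_fderiv_apply one_ne_zero).comp (continuous_id.prodMk continuous_const)

theorem hasDerivAt_setIntegral (hu : ContDiff ℝ 1 (Function.uncurry u))
    {s : Set (ℝ × ℝ)} (hs : Bornology.IsBounded s) (t₀ : ℝ) :
    HasDerivAt (fun t => ∫ p in s, u t p) (∫ p in s, dtu u t₀ p) t₀ := by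
  have hdtu := continuous_uncurry_dtu hu
  obtain ⟨C, hC⟩ := ((isCompact_closedBall t₀ 1).prod hs.isCompact_closure
    ).exists_bound_of_continuousOn hdtu.continuousOn
  have h_bound : ∀ᵐ p ∂volume.restrict s, ∀ t ∈ Metric.closedBall t₀ 1, ‖dtu u t p‖ ≤ C :=
    ae_restrict_of_ae_restrict_of_subset subset_closure <|
      ae_restrict_of_forall_mem measurableSet_closure fun p hp t ht => hC (t, p) ⟨ht, hp⟩
  exact (hasDerivAt_integral_of_dominated_loc_of_deriv_le (Metric.closedBall_mem_nhds t₀ one_pos)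
    (.of_forall fun t => (hu.continuous.uncurry_left t).aestronglyMeasurable)
    (hs.integrableOn_of_continuous (hu.continuous.uncurry_left t₀))
    (hdtu.uncurry_left t₀).aestronglyMeasurable h_bound
    (integrableOn_const hs.measure_lt_top.ne)
    (.of_forall fun p t _ => hasDerivAt_dtu hu t p)).2

end TimeDerivative

theorem mass_conservation_general (ε T : ℝ)
    (u : ℝ → ℝ × ℝ → ℝ) (hu : ContDiff ℝ (⊤ : ℕ∞) (Function.uncurry u))
    (w : ℝ → ℝ × ℝ → ℝ)
    (hw : ∀ t p, w t p = -ε^2 * lap (u t) p + fDW (u t p))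
    (heq : ∀ t ∈ Icc (0:ℝ) T, ∀ p ∈ closure unitSq, dtu u t p = lap (w t) p)
    (hbc : ∀ t ∈ Icc (0:ℝ) T, ZeroNormalDeriv (w t)) :
    ∀ t₁ ∈ Icc (0:ℝ) T, ∀ t₂ ∈ Icc (0:ℝ) T,
      ∫ p in unitSq, u t₁ p = ∫ p in unitSq, u t₂ p := by
  have hu4 : ContDiff ℝ 4 (Function.uncurry u) := hu.of_le (by norm_cast)
  have hw_smooth : ∀ t, ContDiff ℝ 2 (w t) := fun t => by
    have hu_slice : ContDiff ℝ 4 (u t) := hu4.comp (contDiff_const.prodMk contDiff_id)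
    rw [funext (hw t)]
    exact (contDiff_const.mul (hu_slice.lap le_rfl)).add
      ((contDiff_fDW.comp hu_slice).of_le (by norm_num))
  have hmass : ∀ t, HasDerivAt (fun t => ∫ p in unitSq, u t p) (∫ p in unitSq, dtu u t p) t :=
    hasDerivAt_setIntegral (hu4.of_le (by norm_num)) isBounded_unitSq
  have hmass_zero : ∀ t ∈ Icc (0:ℝ) T, ∫ p in unitSq, dtu u t p = 0 := fun t ht => by
    rw [setIntegral_congr_fun (s := unitSq) (measurableSet_Ioo.prod measurableSet_Ioo)
      fun p hp => heq t ht p (subset_closure hp)]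
    exact setIntegral_unitSq_lap_eq_zero (hw_smooth t) (hbc t ht)
  have hconst := constant_of_has_deriv_right_zero
    (fun t _ => (hmass t).continuousAt.continuousWithinAt)
    (fun t ht => hmass_zero t (Ico_subset_Icc_self ht) ▸ (hmass t).hasDerivWithinAt)
  intro t₁ h₁ t₂ h₂
  exact (hconst t₁ h₁).trans (hconst t₂ h₂).symm

/-- **Mass conservation for the Cahn–Hilliard equation.** If `u` is smooth,
`w = -ε²Δu + f(u)`, `∂ₜu = Δw` on `[0,T] × closure Ω`, and `∂ₙw = 0` on the four open
edges of `∂Ω` for all `t ∈ [0,T]`, then the total mass `∫_Ω u(t,·)` is constant on `[0,T]`. -/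
theorem mass_conservation (ε T : ℝ) (hε : 0 < ε) (hT : 0 < T)
    (u : ℝ → ℝ × ℝ → ℝ) (hu : ContDiff ℝ (⊤ : ℕ∞) (Function.uncurry u))
    (w : ℝ → ℝ × ℝ → ℝ)
    (hw : ∀ t p, w t p = -ε^2 * lap (u t) p + fDW (u t p))
    (heq : ∀ t ∈ Icc (0:ℝ) T, ∀ p ∈ closure unitSq, dtu u t p = lap (w t) p)
    (hbc : ∀ t ∈ Icc (0:ℝ) T, ZeroNormalDeriv (w t)) :
    ∀ t₁ ∈ Icc (0:ℝ) T, ∀ t₂ ∈ Icc (0:ℝ) T,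
      ∫ p in unitSq, u t₁ p = ∫ p in unitSq, u t₂ p :=
  mass_conservation_general ε T u hu w hw heq hbc
end

section
/- Let ε > 0, T > 0 and γ ∈ ℝ. Suppose u : ℝ × ℝ² → ℝ is such that u(t,·) is four times continuously differentiable on a neighborhood of the closure of Ω for each t and ∂ₜu is continuous. Then for every t ∈ [0,T] and every infinitely differentiable v : ℝ² → ℝ, the following integration-by-parts identity holds: ∫_Ω ∂ₜu v dx + ε² a₁(u(t,·), v) + ∫_Ω ∇f(u(t,·)) · ∇v dx = ∫_Ω ( ∂ₜu + ε²Δ²u − Δf(u) ) v dx − ε² ∫_{∂Ω} ∂ₙu Δv ds + γ ε² ∫_{∂Ω} ∂ₙu ∂ₙv ds + ∫_{∂Ω} ∂ₙ( −ε²Δu + f(u) ) v ds. -/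
open MeasureTheory Set

/-- The boundary integral `∫_{∂Ω} g ds`: the sum of the four one-dimensional
arclength integrals over the edges of the unit square. -/
noncomputable def bInt (g : ℝ × ℝ → ℝ) : ℝ :=
  (∫ y in Ioo (0:ℝ) 1, g (0, y)) + (∫ y in Ioo (0:ℝ) 1, g (1, y)) +
  (∫ x in Ioo (0:ℝ) 1, g (x, 0)) + (∫ x in Ioo (0:ℝ) 1, g (x, 1))

/-- The outward normal derivative `∂ₙφ` on `∂Ω` (on `{0}×(0,1)` it is `-∂φ/∂x`,
on `{1}×(0,1)` it is `∂φ/∂x`, on `(0,1)×{0}` it is `-∂φ/∂y`, on `(0,1)×{1}` it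
is `∂φ/∂y`). -/
noncomputable def nder (φ : ℝ × ℝ → ℝ) (p : ℝ × ℝ) : ℝ :=
  if p.1 = 0 then -pdx φ p
  else if p.1 = 1 then pdx φ p
  else if p.2 = 0 then -pdy φ p
  else pdy φ p

/-- The Nitsche bilinear form
`a₁(w,v) = ∫_Ω Δw Δv − ∫_{∂Ω} Δw ∂ₙv − ∫_{∂Ω} ∂ₙw Δv + γ ∫_{∂Ω} ∂ₙw ∂ₙv`. -/
noncomputable def a1 (γ : ℝ) (w v : ℝ × ℝ → ℝ) : ℝ :=
  (∫ p in unitSq, lap w p * lap v p)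
    - bInt (fun p => lap w p * nder v p)
    - bInt (fun p => nder w p * lap v p)
    + γ * bInt (fun p => nder w p * nder v p)

/-!
Both sides are rearranged by Green's identities on the square, which come from the divergence
theorem applied to the field `(∂ₓa · b, ∂ᵧa · b)`. Green's first identity for `f(u)` and `v`
trades `∫ ∇f(u) · ∇v` for `-∫ Δf(u) v` plus the flux `∫_{∂Ω} ∂ₙf(u) v`; Green's second identity
for `Δu` and `v` trades `∫ Δu Δv - ∫_{∂Ω} Δu ∂ₙv` for `∫ Δ²u v - ∫_{∂Ω} ∂ₙΔu v`. Since `u(t,·)`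
is `C¹` on a neighbourhood of `closure Ω`, the normal derivative is linear on `∂Ω`, which splits
`∂ₙ(-ε²Δu + f(u))` accordingly.
-/

lemma closure_unitSq : closure unitSq = Icc ((0 : ℝ), (0 : ℝ)) (1, 1) := by
  rw [unitSq, closure_prod_eq, closure_Ioo zero_ne_one, Icc_prod_Icc]

lemma unitSq_subset_Icc : unitSq ⊆ Icc ((0 : ℝ), (0 : ℝ)) (1, 1) :=
  closure_unitSq ▸ subset_closure

lemma unitSq_ae_eq_Icc : unitSq =ᵐ[volume] Icc ((0 : ℝ), (0 : ℝ)) (1, 1) := by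
  rw [unitSq, ← Icc_prod_Icc]
  exact Measure.set_prod_ae_eq Ioo_ae_eq_Icc Ioo_ae_eq_Icc

lemma mk_mem_Icc_unit {x y : ℝ} (hx : x ∈ Icc (0 : ℝ) 1) (hy : y ∈ Icc (0 : ℝ) 1) :
    (x, y) ∈ Icc ((0 : ℝ), (0 : ℝ)) (1, 1) := by
  rw [← Icc_prod_Icc]
  exact ⟨hx, hy⟩

lemma ContinuousOn.integrableOn_unitSq {g : ℝ × ℝ → ℝ}
    (hg : ContinuousOn g (Icc (0, 0) (1, 1))) : IntegrableOn g unitSq :=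
  (hg.integrableOn_compact isCompact_Icc).mono_set unitSq_subset_Icc

section Regularity

variable {s : Set (ℝ × ℝ)}

lemma pdx_contDiffOn {n : ℕ} {φ : ℝ × ℝ → ℝ} (hs : IsOpen s)
    (h : ContDiffOn ℝ (n + 1 : ℕ) φ s) : ContDiffOn ℝ n (pdx φ) s :=
  (h.fderiv_of_isOpen hs (by norm_cast)).clm_apply contDiffOn_const

lemma pdy_contDiffOn {n : ℕ} {φ : ℝ × ℝ → ℝ} (hs : IsOpen s)
    (h : ContDiffOn ℝ (n + 1 : ℕ) φ s) : ContDiffOn ℝ n (pdy φ) s :=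
  (h.fderiv_of_isOpen hs (by norm_cast)).clm_apply contDiffOn_const

lemma lap_contDiffOn {n : ℕ} {φ : ℝ × ℝ → ℝ} (hs : IsOpen s)
    (h : ContDiffOn ℝ (n + 2 : ℕ) φ s) : ContDiffOn ℝ n (lap φ) s :=
  (pdx_contDiffOn hs (pdx_contDiffOn hs h)).add (pdy_contDiffOn hs (pdy_contDiffOn hs h))

end Regularity

section Derivatives

variable {φ ψ : ℝ × ℝ → ℝ} {p : ℝ × ℝ}

lemma pdx_mul (hφ : DifferentiableAt ℝ φ p) (hψ : DifferentiableAt ℝ ψ p) :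
    pdx (fun q => φ q * ψ q) p = pdx φ p * ψ p + φ p * pdx ψ p := by
  simp only [pdx, fderiv_fun_mul hφ hψ, add_apply, smul_apply, smul_eq_mul]
  ring

lemma pdy_mul (hφ : DifferentiableAt ℝ φ p) (hψ : DifferentiableAt ℝ ψ p) :
    pdy (fun q => φ q * ψ q) p = pdy φ p * ψ p + φ p * pdy ψ p := by
  simp only [pdy, fderiv_fun_mul hφ hψ, add_apply, smul_apply, smul_eq_mul]
  ring

lemma nder_const_mul_add (hφ : DifferentiableAt ℝ φ p) (hψ : DifferentiableAt ℝ ψ p)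
    (c : ℝ) : nder (fun q => c * φ q + ψ q) p = c * nder φ p + nder ψ p := by
  have h : fderiv ℝ (fun q => c * φ q + ψ q) p = c • fderiv ℝ φ p + fderiv ℝ ψ p := by
    rw [fderiv_fun_add (hφ.const_mul c) hψ, fderiv_const_mul hφ]
  unfold nder pdx pdy
  split_ifs <;> simp only [h, add_apply, smul_apply, smul_eq_mul] <;> ring

lemma nder_left_edge (y : ℝ) : nder φ (0, y) = -pdx φ (0, y) := by
  simp [nder]

lemma nder_right_edge (y : ℝ) : nder φ (1, y) = pdx φ (1, y) := by
  simp [nder]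

lemma nder_bottom_edge {x : ℝ} (hx : x ∈ Ioo (0 : ℝ) 1) : nder φ (x, 0) = -pdy φ (x, 0) := by
  simp [nder, hx.1.ne', hx.2.ne]

lemma nder_top_edge {x : ℝ} (hx : x ∈ Ioo (0 : ℝ) 1) : nder φ (x, 1) = pdy φ (x, 1) := by
  simp [nder, hx.1.ne', hx.2.ne]

end Derivatives

def BoundaryIntegrable (g : ℝ × ℝ → ℝ) : Prop :=
  IntegrableOn (fun y => g (0, y)) (Ioo 0 1) ∧ IntegrableOn (fun y => g (1, y)) (Ioo 0 1) ∧
    IntegrableOn (fun x => g (x, 0)) (Ioo 0 1) ∧ IntegrableOn (fun x => g (x, 1)) (Ioo 0 1)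

lemma bInt_const_mul_add {g h : ℝ × ℝ → ℝ} (hg : BoundaryIntegrable g)
    (hh : BoundaryIntegrable h) (c : ℝ) :
    bInt (fun p => c * g p + h p) = c * bInt g + bInt h := by
  obtain ⟨hg₁, hg₂, hg₃, hg₄⟩ := hg
  obtain ⟨hh₁, hh₂, hh₃, hh₄⟩ := hh
  simp only [bInt]
  rw [integral_add (hg₁.const_mul c) hh₁, integral_add (hg₂.const_mul c) hh₂,
    integral_add (hg₃.const_mul c) hh₃, integral_add (hg₄.const_mul c) hh₄,
    integral_const_mul, integral_const_mul, integral_const_mul, integral_const_mul]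
  ring

lemma bInt_congr {g h : ℝ × ℝ → ℝ} (hgh : EqOn g h (Icc (0, 0) (1, 1))) :
    bInt g = bInt h := by
  have hmem : ∀ {x y : ℝ}, x ∈ Icc (0 : ℝ) 1 → y ∈ Icc (0 : ℝ) 1 → g (x, y) = h (x, y) :=
    fun hx hy => hgh (mk_mem_Icc_unit hx hy)
  have h₀ : (0 : ℝ) ∈ Icc (0 : ℝ) 1 := left_mem_Icc.2 zero_le_one
  have h₁ : (1 : ℝ) ∈ Icc (0 : ℝ) 1 := right_mem_Icc.2 zero_le_one
  simp only [bInt]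
  rw [setIntegral_congr_fun measurableSet_Ioo fun y hy => hmem h₀ (Ioo_subset_Icc_self hy),
    setIntegral_congr_fun measurableSet_Ioo fun y hy => hmem h₁ (Ioo_subset_Icc_self hy),
    setIntegral_congr_fun measurableSet_Ioo fun x hx => hmem (Ioo_subset_Icc_self hx) h₀,
    setIntegral_congr_fun measurableSet_Ioo fun x hx => hmem (Ioo_subset_Icc_self hx) h₁]

lemma ContinuousOn.boundaryIntegrable {g : ℝ × ℝ → ℝ}
    (hg : ContinuousOn g (Icc (0, 0) (1, 1))) : BoundaryIntegrable g := by
  have hv : ∀ c ∈ Icc (0 : ℝ) 1, IntegrableOn (fun y => g (c, y)) (Ioo 0 1) := fun c hc =>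
    ((hg.comp (by fun_prop) fun _ hy => mk_mem_Icc_unit hc hy).integrableOn_Icc).mono_set
      Ioo_subset_Icc_self
  have hh : ∀ c ∈ Icc (0 : ℝ) 1, IntegrableOn (fun x => g (x, c)) (Ioo 0 1) := fun c hc =>
    ((hg.comp (by fun_prop) fun _ hx => mk_mem_Icc_unit hx hc).integrableOn_Icc).mono_set
      Ioo_subset_Icc_self
  have h₀ : (0 : ℝ) ∈ Icc (0 : ℝ) 1 := left_mem_Icc.2 zero_le_one
  have h₁ : (1 : ℝ) ∈ Icc (0 : ℝ) 1 := right_mem_Icc.2 zero_le_one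
  exact ⟨hv 0 h₀, hv 1 h₁, hh 0 h₀, hh 1 h₁⟩

lemma boundaryIntegrable_nder_mul {φ ψ : ℝ × ℝ → ℝ}
    (hx : ContinuousOn (fun p => pdx φ p * ψ p) (Icc (0, 0) (1, 1)))
    (hy : ContinuousOn (fun p => pdy φ p * ψ p) (Icc (0, 0) (1, 1))) :
    BoundaryIntegrable fun p => nder φ p * ψ p := by
  obtain ⟨hx₀, hx₁, -, -⟩ := hx.boundaryIntegrable
  obtain ⟨-, -, hy₀, hy₁⟩ := hy.boundaryIntegrable
  refine ⟨hx₀.neg.congr_fun (fun y _ => ?_) measurableSet_Ioo,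
    hx₁.congr_fun (fun y _ => ?_) measurableSet_Ioo,
    hy₀.neg.congr_fun (fun x hx => ?_) measurableSet_Ioo,
    hy₁.congr_fun (fun x hx => ?_) measurableSet_Ioo⟩
  · simp [nder_left_edge]
  · simp [nder_right_edge]
  · simp [nder_bottom_edge hx]
  · simp [nder_top_edge hx]

lemma bInt_nder_mul (φ ψ : ℝ × ℝ → ℝ) :
    bInt (fun p => nder φ p * ψ p) =
      -(∫ y in Ioo (0 : ℝ) 1, pdx φ (0, y) * ψ (0, y))
        + (∫ y in Ioo (0 : ℝ) 1, pdx φ (1, y) * ψ (1, y))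
        - (∫ x in Ioo (0 : ℝ) 1, pdy φ (x, 0) * ψ (x, 0))
        + ∫ x in Ioo (0 : ℝ) 1, pdy φ (x, 1) * ψ (x, 1) := by
  have h₃ : ∫ x in Ioo (0 : ℝ) 1, nder φ (x, 0) * ψ (x, 0)
      = -∫ x in Ioo (0 : ℝ) 1, pdy φ (x, 0) * ψ (x, 0) := by
    rw [← integral_neg]
    exact setIntegral_congr_fun measurableSet_Ioo fun x hx => by simp [nder_bottom_edge hx]
  have h₄ : ∫ x in Ioo (0 : ℝ) 1, nder φ (x, 1) * ψ (x, 1)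
      = ∫ x in Ioo (0 : ℝ) 1, pdy φ (x, 1) * ψ (x, 1) :=
    setIntegral_congr_fun measurableSet_Ioo fun x hx => by simp [nder_top_edge hx]
  simp only [bInt, nder_left_edge, nder_right_edge, neg_mul, integral_neg, h₃, h₄]
  ring

section Green

variable {s : Set (ℝ × ℝ)}

theorem integral_pdx_add_pdy_unitSq (hs : IsOpen s) (hcl : Icc (0, 0) (1, 1) ⊆ s)
    {f g : ℝ × ℝ → ℝ} (hf : ContDiffOn ℝ 1 f s) (hg : ContDiffOn ℝ 1 g s) :
    ∫ p in unitSq, (pdx f p + pdy g p) =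
      -(∫ y in Ioo (0 : ℝ) 1, f (0, y)) + (∫ y in Ioo (0 : ℝ) 1, f (1, y))
      - (∫ x in Ioo (0 : ℝ) 1, g (x, 0)) + ∫ x in Ioo (0 : ℝ) 1, g (x, 1) := by
  have hdiv : ContinuousOn (fun p => pdx f p + pdy g p) s :=
    ((pdx_contDiffOn (n := 0) hs hf).add (pdy_contDiffOn (n := 0) hs hg)).continuousOn
  have hnhds : ∀ p ∈ unitSq \ ∅, s ∈ nhds p := fun p hp =>
    hs.mem_nhds (hcl (unitSq_subset_Icc hp.1))
  have hf' : ∀ p ∈ unitSq \ ∅, HasFDerivAt f (fderiv ℝ f p) p := fun p hp =>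
    ((hf.contDiffAt (hnhds p hp)).differentiableAt one_ne_zero).hasFDerivAt
  have hg' : ∀ p ∈ unitSq \ ∅, HasFDerivAt g (fderiv ℝ g p) p := fun p hp =>
    ((hg.contDiffAt (hnhds p hp)).differentiableAt one_ne_zero).hasFDerivAt
  rw [setIntegral_congr_set unitSq_ae_eq_Icc]
  refine (integral_divergence_prod_Icc_of_hasFDerivAt_off_countable_of_le f g (fderiv ℝ f)
    (fderiv ℝ g) (0, 0) (1, 1) (by simp [Prod.le_def]) ∅ countable_empty
    (hf.continuousOn.mono hcl) (hg.continuousOn.mono hcl) hf' hg'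
    ((hdiv.mono hcl).integrableOn_compact isCompact_Icc)).trans ?_
  simp only [intervalIntegral.integral_of_le zero_le_one, integral_Ioc_eq_integral_Ioo]
  ring

theorem green_first_identity (hs : IsOpen s) (hcl : Icc (0, 0) (1, 1) ⊆ s)
    {a b : ℝ × ℝ → ℝ} (ha : ContDiffOn ℝ 2 a s) (hb : ContDiffOn ℝ 1 b s) :
    (∫ p in unitSq, lap a p * b p) + ∫ p in unitSq, (pdx a p * pdx b p + pdy a p * pdy b p) =
      bInt fun p => nder a p * b p := by
  have hax : ContDiffOn ℝ 1 (pdx a) s := pdx_contDiffOn hs ha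
  have hay : ContDiffOn ℝ 1 (pdy a) s := pdy_contDiffOn hs ha
  have hlap : IntegrableOn (fun p => lap a p * b p) unitSq :=
    (((lap_contDiffOn (n := 0) hs ha).continuousOn.mul hb.continuousOn).mono
      hcl).integrableOn_unitSq
  have hgrad : IntegrableOn (fun p => pdx a p * pdx b p + pdy a p * pdy b p) unitSq :=
    (((hax.continuousOn.mul (pdx_contDiffOn (n := 0) hs hb).continuousOn).add
      (hay.continuousOn.mul (pdy_contDiffOn (n := 0) hs hb).continuousOn)).mono
        hcl).integrableOn_unitSq
  rw [← integral_add hlap hgrad, bInt_nder_mul,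
    ← integral_pdx_add_pdy_unitSq hs hcl (hax.mul hb) (hay.mul hb)]
  refine setIntegral_congr_fun (measurableSet_Ioo.prod measurableSet_Ioo) fun p hp => ?_
  have hp' : s ∈ nhds p := hs.mem_nhds (hcl (unitSq_subset_Icc hp))
  rw [pdx_mul ((hax.contDiffAt hp').differentiableAt one_ne_zero)
      ((hb.contDiffAt hp').differentiableAt one_ne_zero),
    pdy_mul ((hay.contDiffAt hp').differentiableAt one_ne_zero)
      ((hb.contDiffAt hp').differentiableAt one_ne_zero), lap]
  ring

theorem green_second_identity (hs : IsOpen s) (hcl : Icc (0, 0) (1, 1) ⊆ s)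
    {a b : ℝ × ℝ → ℝ} (ha : ContDiffOn ℝ 2 a s) (hb : ContDiffOn ℝ 2 b s) :
    (∫ p in unitSq, lap a p * b p) - ∫ p in unitSq, a p * lap b p =
      (bInt fun p => nder a p * b p) - bInt fun p => a p * nder b p := by
  have hab := green_first_identity hs hcl ha (hb.of_le one_le_two)
  have hba := green_first_identity hs hcl hb (ha.of_le one_le_two)
  have hgrad : (fun p => pdx b p * pdx a p + pdy b p * pdy a p) =
      fun p => pdx a p * pdx b p + pdy a p * pdy b p := funext fun p => by ring
  rw [hgrad] at hba
  rw [funext fun p => mul_comm (a p) (lap b p), funext fun p => mul_comm (a p) (nder b p)]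
  linarith

end Green

theorem nitsche_identity {s : Set (ℝ × ℝ)} (hs : IsOpen s) (hcl : Icc (0, 0) (1, 1) ⊆ s)
    {w P v d : ℝ × ℝ → ℝ} (hw : ContDiffOn ℝ 4 w s) (hP : ContDiffOn ℝ 2 P s)
    (hv : ContDiffOn ℝ 2 v s) (hd : IntegrableOn (fun p => d p * v p) unitSq) (ε γ : ℝ) :
    (∫ p in unitSq, d p * v p) + ε ^ 2 * a1 γ w v +
        (∫ p in unitSq, (pdx P p * pdx v p + pdy P p * pdy v p))
      = (∫ p in unitSq, (d p + ε ^ 2 * lap (lap w) p - lap P p) * v p)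
        - ε ^ 2 * bInt (fun p => nder w p * lap v p)
        + γ * ε ^ 2 * bInt (fun p => nder w p * nder v p)
        + bInt (fun p => nder (fun q => -ε ^ 2 * lap w q + P q) p * v p) := by
  have hlap : ContDiffOn ℝ 2 (lap w) s := lap_contDiffOn (n := 2) hs hw
  have hv' : ContinuousOn v (Icc (0, 0) (1, 1)) := hv.continuousOn.mono hcl
  have hbilap : IntegrableOn (fun p => lap (lap w) p * v p) unitSq :=
    (((lap_contDiffOn (n := 0) hs hlap).continuousOn.mono hcl).mul hv').integrableOn_unitSq
  have hlapP : IntegrableOn (fun p => lap P p * v p) unitSq :=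
    (((lap_contDiffOn (n := 0) hs hP).continuousOn.mono hcl).mul hv').integrableOn_unitSq
  have hinterior : ∫ p in unitSq, (d p + ε ^ 2 * lap (lap w) p - lap P p) * v p =
      (∫ p in unitSq, d p * v p) + ε ^ 2 * (∫ p in unitSq, lap (lap w) p * v p)
        - ∫ p in unitSq, lap P p * v p := by
    have hexpand : (fun p => (d p + ε ^ 2 * lap (lap w) p - lap P p) * v p) =
        fun p => d p * v p + ε ^ 2 * (lap (lap w) p * v p) - lap P p * v p :=
      funext fun p => by ring
    have hsum : IntegrableOn (fun p => d p * v p + ε ^ 2 * (lap (lap w) p * v p)) unitSq :=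
      hd.add (hbilap.const_mul _)
    rw [hexpand, integral_sub hsum hlapP,
      integral_add hd (hbilap.const_mul _), integral_const_mul]
  have hboundary : bInt (fun p => nder (fun q => -ε ^ 2 * lap w q + P q) p * v p) =
      -ε ^ 2 * bInt (fun p => nder (lap w) p * v p) + bInt (fun p => nder P p * v p) := by
    have hflux : ∀ {φ : ℝ × ℝ → ℝ}, ContDiffOn ℝ 2 φ s →
        BoundaryIntegrable fun p => nder φ p * v p := fun hφ =>
      boundaryIntegrable_nder_mul
        (((pdx_contDiffOn (n := 1) hs hφ).continuousOn.mono hcl).mul hv')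
        (((pdy_contDiffOn (n := 1) hs hφ).continuousOn.mono hcl).mul hv')
    rw [← bInt_const_mul_add (hflux hlap) (hflux hP)]
    refine bInt_congr fun p hp => ?_
    have hp' : s ∈ nhds p := hs.mem_nhds (hcl hp)
    rw [nder_const_mul_add ((hlap.contDiffAt hp').differentiableAt two_ne_zero)
      ((hP.contDiffAt hp').differentiableAt two_ne_zero)]
    ring
  have hfirst := green_first_identity hs hcl hP (hv.of_le one_le_two)
  have hsecond := green_second_identity hs hcl hlap hv
  rw [a1, hinterior, hboundary]
  linear_combination hfirst - ε ^ 2 * hsecond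

theorem nitsche_integration_by_parts_general (ε T γ : ℝ)
    (u : ℝ → ℝ × ℝ → ℝ)
    (hreg : ∀ t : ℝ, ∃ s : Set (ℝ × ℝ),
      IsOpen s ∧ closure unitSq ⊆ s ∧ ContDiffOn ℝ 4 (u t) s)
    (hcont : Continuous fun q : ℝ × (ℝ × ℝ) => dtu u q.1 q.2) :
    ∀ t ∈ Icc (0:ℝ) T, ∀ v : ℝ × ℝ → ℝ, ContDiff ℝ (⊤ : ℕ∞) v →
      (∫ p in unitSq, dtu u t p * v p) + ε^2 * a1 γ (u t) v +
        (∫ p in unitSq,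
          (pdx (fun q => fDW (u t q)) p * pdx v p +
           pdy (fun q => fDW (u t q)) p * pdy v p))
      = (∫ p in unitSq,
          (dtu u t p + ε^2 * lap (lap (u t)) p - lap (fun q => fDW (u t q)) p) * v p)
        - ε^2 * bInt (fun p => nder (u t) p * lap v p)
        + γ * ε^2 * bInt (fun p => nder (u t) p * nder v p)
        + bInt (fun p => nder (fun q => -ε^2 * lap (u t) q + fDW (u t q)) p * v p) := by
  intro t _ v hv
  obtain ⟨s, hs, hsub, hu⟩ := hreg t
  have hfDW : ContDiff ℝ 2 fDW := by unfold fDW; fun_prop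
  have hdtu : Continuous (dtu u t) := hcont.comp (Continuous.prodMk_right t)
  have hv2 : ContDiff ℝ 2 v := hv.of_le (ENat.natCast_le_of_coe_top_le_withTop le_rfl 2)
  exact nitsche_identity hs (closure_unitSq ▸ hsub) hu
    (hfDW.comp_contDiffOn (hu.of_le (by norm_num))) hv2.contDiffOn
    ((hdtu.mul hv.continuous).continuousOn.integrableOn_unitSq) ε γ

/-- **Integration-by-parts identity for the Nitsche form.** If `u(t,·)` is `C⁴` on a
neighborhood of `closure Ω` for each `t` and `∂ₜu` is continuous, then for every
`t ∈ [0,T]` and every smooth `v`,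
`∫_Ω ∂ₜu v + ε² a₁(u(t,·), v) + ∫_Ω ∇f(u(t,·))·∇v
  = ∫_Ω (∂ₜu + ε²Δ²u − Δf(u)) v − ε² ∫_{∂Ω} ∂ₙu Δv + γε² ∫_{∂Ω} ∂ₙu ∂ₙv
    + ∫_{∂Ω} ∂ₙ(−ε²Δu + f(u)) v`. -/
theorem nitsche_integration_by_parts (ε T γ : ℝ) (hε : 0 < ε) (hT : 0 < T)
    (u : ℝ → ℝ × ℝ → ℝ)
    (hreg : ∀ t : ℝ, ∃ s : Set (ℝ × ℝ),
      IsOpen s ∧ closure unitSq ⊆ s ∧ ContDiffOn ℝ 4 (u t) s)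
    (hcont : Continuous fun q : ℝ × (ℝ × ℝ) => dtu u q.1 q.2) :
    ∀ t ∈ Icc (0:ℝ) T, ∀ v : ℝ × ℝ → ℝ, ContDiff ℝ (⊤ : ℕ∞) v →
      (∫ p in unitSq, dtu u t p * v p) + ε^2 * a1 γ (u t) v +
        (∫ p in unitSq,
          (pdx (fun q => fDW (u t q)) p * pdx v p +
           pdy (fun q => fDW (u t q)) p * pdy v p))
      = (∫ p in unitSq,
          (dtu u t p + ε^2 * lap (lap (u t)) p - lap (fun q => fDW (u t q)) p) * v p)
        - ε^2 * bInt (fun p => nder (u t) p * lap v p)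
        + γ * ε^2 * bInt (fun p => nder (u t) p * nder v p)
        + bInt (fun p => nder (fun q => -ε^2 * lap (u t) q + fDW (u t q)) p * v p) :=
  nitsche_integration_by_parts_general ε T γ u hreg hcont
end

section
/- Fix h > 0, z ∈ ℝ², and data u₀, …, u₆ ∈ ℝ. Then the evaluation map sending a polynomial p ∈ ℙ₂ to the vector (p(z₀), p(z₁), …, p(z₆)) ∈ ℝ⁷ is injective, and consequently there exists a unique polynomial p ∈ ℙ₂ minimizing the least-squares functional Σ_{j=0}^{6} (p(z_j) − u_j)² over ℙ₂ (i.e., the seven-point patch of a vertex of a regular-pattern uniform mesh satisfies the rank condition). -/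
/-!
The residual `∑ⱼ (p(zⱼ) − uⱼ)²` is the squared Euclidean distance from `u` to the vector of
sampled values of `p`. Over a subspace `S` of functions, the sampled vectors form a subspace of
`ℝ⁷`, so the least-squares fits are exactly the `p ∈ S` whose samples are the orthogonal projection
of `u`; such `p` exist, and are unique as soon as sampling is injective on `S`. For `ℙ₂` on the
seven-point patch, injectivity follows from finite differences: a quadratic vanishing on the patch
has vanishing second differences in the directions `(1,0)`, `(0,1)`, `(1,1)`, which kills its
quadratic part, and then its first differences kill the linear part.
-/

open Finset

/-- `p : ℝ² → ℝ` is a polynomial function of total degree at most 2, i.e. a member of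
the six-dimensional space `ℙ₂`. -/
def IsP2 (p : ℝ × ℝ → ℝ) : Prop :=
  ∃ a b c d e f : ℝ, ∀ q : ℝ × ℝ,
    p q = a + b * q.1 + c * q.2 + d * q.1 ^ 2 + e * q.1 * q.2 + f * q.2 ^ 2

/-- The seven sampling points `z₀, …, z₆` of the first-layer patch of a vertex `z` of a
regular-pattern uniform triangular mesh with mesh size `h`. -/
def pts (h : ℝ) (z : ℝ × ℝ) : Fin 7 → ℝ × ℝ :=
  ![z, z + (h, 0), z + (h, h), z + (0, h), z - (h, 0), z - (h, h), z - (0, h)]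

/-- The least-squares functional `Σ_{j=0}^{6} (p(z_j) − u_j)²`. -/
noncomputable def LS (h : ℝ) (z : ℝ × ℝ) (u : Fin 7 → ℝ) (p : ℝ × ℝ → ℝ) : ℝ :=
  ∑ j : Fin 7, (p (pts h z j) - u j) ^ 2

theorem Submodule.forall_norm_sub_le_iff_eq_starProjection {𝕜 E : Type*} [RCLike 𝕜]
    [NormedAddCommGroup E] [InnerProductSpace 𝕜 E] (K : Submodule 𝕜 E) [K.HasOrthogonalProjection]
    {y w : E} (hw : w ∈ K) : (∀ w' ∈ K, ‖y - w‖ ≤ ‖y - w'‖) ↔ w = K.starProjection y := by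
  have hbdd : BddBelow (Set.range fun x : K => ‖y - x‖) :=
    ⟨0, Set.forall_mem_range.2 fun _ => norm_nonneg _⟩
  constructor
  · intro hmin
    have hinf : ‖y - w‖ = ⨅ x : K, ‖y - x‖ :=
      le_antisymm (le_ciInf fun x => hmin x x.2) (ciInf_le hbdd ⟨w, hw⟩)
    exact (K.eq_starProjection_of_mem_of_inner_eq_zero hw
      ((K.norm_eq_iInf_iff_inner_eq_zero hw).1 hinf)).symm
  · rintro rfl w' hw'
    rw [K.starProjection_minimal]
    exact ciInf_le hbdd ⟨w', hw'⟩

section LeastSquares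

variable {X ι : Type*}

def pointEval (x : ι → X) : (X → ℝ) →ₗ[ℝ] EuclideanSpace ℝ ι where
  toFun p := WithLp.toLp 2 (p ∘ x)
  map_add' _ _ := rfl
  map_smul' _ _ := rfl

@[simp]
lemma pointEval_apply (x : ι → X) (p : X → ℝ) (j : ι) : pointEval x p j = p (x j) := rfl

variable [Fintype ι]

def sumSqResidual (x : ι → X) (u : ι → ℝ) (p : X → ℝ) : ℝ :=
  ∑ j, (p (x j) - u j) ^ 2

lemma sumSqResidual_eq_norm_sq (x : ι → X) (u : ι → ℝ) (p : X → ℝ) :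
    sumSqResidual x u p = ‖WithLp.toLp 2 u - pointEval x p‖ ^ 2 := by
  rw [EuclideanSpace.real_norm_sq_eq]
  exact Finset.sum_congr rfl fun j _ => by simp [sub_sq_comm]

theorem existsUnique_mem_forall_sumSqResidual_le (S : Submodule ℝ (X → ℝ)) {x : ι → X}
    (hinj : Set.InjOn (pointEval x) S) (u : ι → ℝ) :
    ∃! p, p ∈ S ∧ ∀ q ∈ S, sumSqResidual x u p ≤ sumSqResidual x u q := by
  set K := S.map (pointEval x)
  set y := WithLp.toLp 2 u
  have hmin : ∀ p ∈ S, (∀ q ∈ S, sumSqResidual x u p ≤ sumSqResidual x u q) ↔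
      pointEval x p = K.starProjection y := by
    intro p hp
    rw [← K.forall_norm_sub_le_iff_eq_starProjection (Submodule.mem_map_of_mem hp)]
    simp only [sumSqResidual_eq_norm_sq, K, Submodule.mem_map, forall_exists_index, and_imp,
      forall_apply_eq_imp_iff₂]
    exact forall₂_congr fun q _ => sq_le_sq₀ (norm_nonneg _) (norm_nonneg _)
  obtain ⟨p₀, hp₀, hp₀y⟩ := Submodule.mem_map.1 (K.starProjection_apply_mem y)
  refine ⟨p₀, ⟨hp₀, (hmin p₀ hp₀).2 hp₀y⟩, fun p ⟨hp, hpmin⟩ => hinj hp hp₀ ?_⟩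
  rw [(hmin p hp).1 hpmin, hp₀y]

end LeastSquares

def P2 : Submodule ℝ (ℝ × ℝ → ℝ) where
  carrier := {p | IsP2 p}
  zero_mem' := ⟨0, 0, 0, 0, 0, 0, fun _ => by simp⟩
  add_mem' := by
    rintro p q ⟨a, b, c, d, e, f, hp⟩ ⟨a', b', c', d', e', f', hq⟩
    exact ⟨a + a', b + b', c + c', d + d', e + e', f + f', fun w => by
      simp only [Pi.add_apply, hp, hq]; ring⟩
  smul_mem' := by
    rintro r p ⟨a, b, c, d, e, f, hp⟩
    exact ⟨r * a, r * b, r * c, r * d, r * e, r * f, fun w => by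
      simp only [Pi.smul_apply, smul_eq_mul, hp]; ring⟩

theorem IsP2.eq_zero_of_forall_pts_eq_zero {p : ℝ × ℝ → ℝ} (hp : IsP2 p) {h : ℝ} (hh : h ≠ 0)
    (z : ℝ × ℝ) (hvan : ∀ j, p (pts h z j) = 0) : p = 0 := by
  obtain ⟨a, b, c, d, e, f, hp⟩ := hp
  have E := fun j => (hp (pts h z j)).symm.trans (hvan j)
  have E₀ := E 0; have E₁ := E 1; have E₂ := E 2; have E₃ := E 3
  have E₄ := E 4; have E₅ := E 5; have E₆ := E 6
  simp only [pts, Matrix.cons_val, Prod.fst_add, Prod.snd_add, Prod.fst_sub, Prod.snd_sub]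
    at E₀ E₁ E₂ E₃ E₄ E₅ E₆
  have hh2 : h ^ 2 ≠ 0 := pow_ne_zero 2 hh
  have hd : d = 0 := by
    have : d * h ^ 2 = 0 := by linear_combination (E₁ + E₄ - 2 * E₀) / 2
    simpa [hh2] using this
  have hf : f = 0 := by
    have : f * h ^ 2 = 0 := by linear_combination (E₃ + E₆ - 2 * E₀) / 2
    simpa [hh2] using this
  have he : e = 0 := by
    have : e * h ^ 2 = 0 := by linear_combination (E₂ + E₅ - 2 * E₀) / 2 - h ^ 2 * hd - h ^ 2 * hf
    simpa [hh2] using this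
  subst hd he hf
  have hb : b = 0 := by
    have : b * h = 0 := by linear_combination E₁ - E₀
    simpa [hh] using this
  have hc : c = 0 := by
    have : c * h = 0 := by linear_combination E₃ - E₀
    simpa [hh] using this
  subst hb hc
  have ha : a = 0 := by linear_combination E₀
  funext w
  simp [hp, ha]

theorem injOn_pointEval_pts {h : ℝ} (hh : h ≠ 0) (z : ℝ × ℝ) :
    Set.InjOn (pointEval (pts h z)) P2 :=
  LinearMap.disjoint_ker_iff_injOn.1 <| LinearMap.disjoint_ker.2 fun p hp hp0 =>
    hp.eq_zero_of_forall_pts_eq_zero hh z fun j => by simpa using congr($hp0 j)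

/-- **The seven-point patch satisfies the rank condition.** The evaluation map
`ℙ₂ → ℝ⁷`, `p ↦ (p(z₀), …, p(z₆))`, is injective, and consequently for any data
`u₀, …, u₆` there is a unique polynomial in `ℙ₂` minimizing the least-squares
functional `Σ_{j=0}^{6} (p(z_j) − u_j)²` over `ℙ₂`. -/
theorem rank_condition_regular_patch (h : ℝ) (hh : 0 < h) (z : ℝ × ℝ) (u : Fin 7 → ℝ) :
    (∀ p q : ℝ × ℝ → ℝ, IsP2 p → IsP2 q →
      (∀ j : Fin 7, p (pts h z j) = q (pts h z j)) → p = q) ∧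
    (∃! p : ℝ × ℝ → ℝ, IsP2 p ∧ ∀ q : ℝ × ℝ → ℝ, IsP2 q → LS h z u p ≤ LS h z u q) := by
  have hinj := injOn_pointEval_pts hh.ne' z
  exact ⟨fun p q hp hq hpq => hinj hp hq (PiLp.ext hpq),
    existsUnique_mem_forall_sumSqResidual_le P2 hinj u⟩
end

section
/- Fix h > 0, z ∈ ℝ², and data u₀, …, u₆ ∈ ℝ, and let p ∈ ℙ₂ be any minimizer of the least-squares functional Σ_{j=0}^{6} (p(z_j) − u_j)² over ℙ₂. Then the (constant) second partial derivative of p in the x-direction satisfies ∂²p/∂x² (z) = (u₁ − 2u₀ + u₄) / h². -/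
/-!
Since `t ↦ LS (p + t q)` is minimal at `t = 0` for every `q ∈ ℙ₂`, the residual
`p(z_j) - u_j` is orthogonal to the values of every quadratic on the patch. The stencil
`(-2, 1, 0, 0, 1, 0, 0)` is such a vector of values, so a minimiser reproduces the data's
central difference exactly: `p(z₁) - 2 p(z₀) + p(z₄) = u₁ - 2 u₀ + u₄`. For a quadratic the
left-hand side is exactly `h² ∂²p/∂x²`.
-/

open Finset

lemma sum_mul_eq_zero_of_forall_sum_sq_le {ι : Type*} [Fintype ι] (r w : ι → ℝ)
    (hmin : ∀ t : ℝ, ∑ j, r j ^ 2 ≤ ∑ j, (r j + t * w j) ^ 2) :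
    ∑ j, r j * w j = 0 := by
  set S := ∑ j, r j * w j
  set W := ∑ j, w j ^ 2
  have hW : 0 ≤ W := sum_nonneg fun j _ => sq_nonneg (w j)
  have expand : ∀ t : ℝ, ∑ j, (r j + t * w j) ^ 2 = ∑ j, r j ^ 2 + 2 * t * S + t ^ 2 * W := by
    intro t
    simp only [S, W, mul_sum, ← sum_add_distrib]
    exact sum_congr rfl fun j _ => by ring
  -- At `t = -S / (W + 1)` the increment is `-S² (W + 2) / (W + 1)²`.
  have key := hmin (-S / (W + 1))
  rw [expand] at key
  have hW1 : 0 < W + 1 := by linarith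
  have : S ^ 2 * (W + 2) ≤ 0 := by
    field_simp at key
    nlinarith
  nlinarith [sq_nonneg S]

lemma pdx_of_forall_eq (a b c d e f : ℝ) (φ : ℝ × ℝ → ℝ)
    (hφ : ∀ q : ℝ × ℝ, φ q = a + b * q.1 + c * q.2 + d * q.1 ^ 2 + e * q.1 * q.2 + f * q.2 ^ 2)
    (q : ℝ × ℝ) : pdx φ q = b + 2 * d * q.1 + e * q.2 := by
  obtain rfl : φ = fun q => a + b * q.1 + c * q.2 + d * q.1 ^ 2 + e * q.1 * q.2 + f * q.2 ^ 2 :=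
    funext hφ
  have h1 : HasFDerivAt (fun q : ℝ × ℝ => q.1) (ContinuousLinearMap.fst ℝ ℝ ℝ) q := hasFDerivAt_fst
  have h2 : HasFDerivAt (fun q : ℝ × ℝ => q.2) (ContinuousLinearMap.snd ℝ ℝ ℝ) q := hasFDerivAt_snd
  have H : HasFDerivAt
      (fun q : ℝ × ℝ => a + b * q.1 + c * q.2 + d * q.1 ^ 2 + e * q.1 * q.2 + f * q.2 ^ 2) _ q :=
    (((((hasFDerivAt_const a q).add (h1.const_mul b)).add (h2.const_mul c)).add
      ((h1.pow 2).const_mul d)).add ((h1.const_mul e).mul h2)).add ((h2.pow 2).const_mul f)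
  rw [pdx, H.fderiv]
  simp only [zero_apply, add_apply, smul_apply, smul_eq_mul, ContinuousLinearMap.coe_fst',
    ContinuousLinearMap.coe_snd']
  ring

lemma pdx_pdx_of_forall_eq (a b c d e f : ℝ) (φ : ℝ × ℝ → ℝ)
    (hφ : ∀ q : ℝ × ℝ, φ q = a + b * q.1 + c * q.2 + d * q.1 ^ 2 + e * q.1 * q.2 + f * q.2 ^ 2)
    (q : ℝ × ℝ) : pdx (pdx φ) q = 2 * d := by
  have hφ' := pdx_of_forall_eq a b c d e f φ hφ
  simpa using pdx_of_forall_eq b (2 * d) e 0 0 0 (pdx φ) (fun q => by rw [hφ']; ring) q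

lemma IsP2.central_difference {p : ℝ × ℝ → ℝ} (hp : IsP2 p) (z : ℝ × ℝ) (h : ℝ) :
    p (z + (h, 0)) - 2 * p z + p (z - (h, 0)) = h ^ 2 * pdx (pdx p) z := by
  obtain ⟨a, b, c, d, e, f, hpf⟩ := hp
  rw [pdx_pdx_of_forall_eq a b c d e f p hpf, hpf, hpf, hpf]
  simp only [Prod.fst_add, Prod.snd_add, Prod.fst_sub, Prod.snd_sub, add_zero, sub_zero]
  ring

lemma IsP2.add_const_mul {p q : ℝ × ℝ → ℝ} (hp : IsP2 p) (hq : IsP2 q) (t : ℝ) :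
    IsP2 fun x => p x + t * q x := by
  obtain ⟨a, b, c, d, e, f, hpf⟩ := hp
  obtain ⟨a', b', c', d', e', f', hqf⟩ := hq
  exact ⟨a + t * a', b + t * b', c + t * c', d + t * d', e + t * e', f + t * f',
    fun x => by simp only [hpf, hqf]; ring⟩

noncomputable def xxStencilQuadratic (h : ℝ) (z x : ℝ × ℝ) : ℝ :=
  (3 * (x.1 - z.1) ^ 2 - 3 * (x.1 - z.1) * (x.2 - z.2) + 2 * (x.2 - z.2) ^ 2) / h ^ 2 - 2

lemma isP2_xxStencilQuadratic (h : ℝ) (z : ℝ × ℝ) : IsP2 (xxStencilQuadratic h z) :=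
  ⟨(3 * z.1 ^ 2 - 3 * z.1 * z.2 + 2 * z.2 ^ 2) / h ^ 2 - 2, (-6 * z.1 + 3 * z.2) / h ^ 2,
    (3 * z.1 - 4 * z.2) / h ^ 2, 3 / h ^ 2, -3 / h ^ 2, 2 / h ^ 2,
    fun x => by simp only [xxStencilQuadratic]; ring⟩

lemma xxStencilQuadratic_pts {h : ℝ} (hh : h ≠ 0) (z : ℝ × ℝ) (j : Fin 7) :
    xxStencilQuadratic h z (pts h z j) = ![-2, 1, 0, 0, 1, 0, 0] j := by
  fin_cases j <;>
    simp only [xxStencilQuadratic, pts, Fin.reduceFinMk, Fin.zero_eta, Fin.mk_one, Matrix.cons_val,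
      Matrix.cons_val_zero, Matrix.cons_val_one, Prod.fst_add, Prod.snd_add, Prod.fst_sub,
      Prod.snd_sub] <;>
    field_simp <;> ring

/-- For any least-squares fitted quadratic `p` on the seven-point patch, the recovered
second `x`-derivative at `z` is the central difference `(u₁ − 2u₀ + u₄)/h²`. -/
theorem recovered_xx_derivative (h : ℝ) (hh : 0 < h) (z : ℝ × ℝ) (u : Fin 7 → ℝ)
    (p : ℝ × ℝ → ℝ) (hp : IsP2 p)
    (hmin : ∀ q : ℝ × ℝ → ℝ, IsP2 q → LS h z u p ≤ LS h z u q) :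
    pdx (pdx p) z = (u 1 - 2 * u 0 + u 4) / h ^ 2 := by
  have hres := sum_mul_eq_zero_of_forall_sum_sq_le (fun j => p (pts h z j) - u j)
    (fun j => xxStencilQuadratic h z (pts h z j)) fun t =>
      (hmin _ (hp.add_const_mul (isP2_xxStencilQuadratic h z) t)).trans_eq
        (sum_congr rfl fun j _ => by ring)
  simp only [xxStencilQuadratic_pts hh.ne', Fin.sum_univ_seven] at hres
  rw [eq_div_iff (by positivity), mul_comm, ← hp.central_difference z h]
  simp only [pts, Matrix.cons_val_zero, Matrix.cons_val_one, Matrix.cons_val] at hres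
  linarith
end

section
/- Fix h > 0, z ∈ ℝ², and data u₀, …, u₆ ∈ ℝ, and let p ∈ ℙ₂ be any minimizer of the least-squares functional Σ_{j=0}^{6} (p(z_j) − u_j)² over ℙ₂. Then the (constant) second partial derivative of p in the y-direction satisfies ∂²p/∂y² (z) = (u₃ − 2u₀ + u₆) / h². -/
open Finset

lemma pdy_quad (a b c d e f : ℝ) :
    pdy (fun q : ℝ × ℝ => a + b * q.1 + c * q.2 + d * q.1 ^ 2 + e * q.1 * q.2 + f * q.2 ^ 2)
      = fun q : ℝ × ℝ => c + e * q.1 + 2 * f * q.2 := by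
  funext q
  have h1 : HasFDerivAt (fun q : ℝ × ℝ => q.1) (ContinuousLinearMap.fst ℝ ℝ ℝ) q := hasFDerivAt_fst
  have h2 : HasFDerivAt (fun q : ℝ × ℝ => q.2) (ContinuousLinearMap.snd ℝ ℝ ℝ) q := hasFDerivAt_snd
  have H : HasFDerivAt
      (fun q : ℝ × ℝ => a + b * q.1 + c * q.2 + d * q.1 ^ 2 + e * q.1 * q.2 + f * q.2 ^ 2)
      (0 + b • ContinuousLinearMap.fst ℝ ℝ ℝ + c • ContinuousLinearMap.snd ℝ ℝ ℝ +
          d • (q.1 • ContinuousLinearMap.fst ℝ ℝ ℝ + q.1 • ContinuousLinearMap.fst ℝ ℝ ℝ) +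
        e • (q.1 • ContinuousLinearMap.snd ℝ ℝ ℝ + q.2 • ContinuousLinearMap.fst ℝ ℝ ℝ) +
      f • (q.2 • ContinuousLinearMap.snd ℝ ℝ ℝ + q.2 • ContinuousLinearMap.snd ℝ ℝ ℝ)) q := by
    simp only [pow_two, mul_assoc]
    exact (((((hasFDerivAt_const a q).add (h1.const_mul b)).add (h2.const_mul c)).add
      ((h1.mul h1).const_mul d)).add ((h1.mul h2).const_mul e)).add ((h2.mul h2).const_mul f)
  rw [pdy, H.fderiv]
  simp
  ring

lemma pdy_pdy_quad (a b c d e f : ℝ) (z : ℝ × ℝ) :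
    pdy (pdy (fun q : ℝ × ℝ => a + b * q.1 + c * q.2 + d * q.1 ^ 2 + e * q.1 * q.2 + f * q.2 ^ 2)) z
      = 2 * f := by
  rw [pdy_quad]
  have : (fun q : ℝ × ℝ => c + e * q.1 + 2 * f * q.2)
      = fun q : ℝ × ℝ => c + e * q.1 + (2 * f) * q.2 + 0 * q.1 ^ 2 + 0 * q.1 * q.2 + 0 * q.2 ^ 2 := by
    funext q; ring
  rw [this, pdy_quad]
  ring

/-- For any least-squares fitted quadratic `p` on the seven-point patch, the recovered
second `y`-derivative at `z` is the central difference `(u₃ − 2u₀ + u₆)/h²`. -/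
theorem recovered_yy_derivative (h : ℝ) (hh : 0 < h) (z : ℝ × ℝ) (u : Fin 7 → ℝ)
    (p : ℝ × ℝ → ℝ) (hp : IsP2 p)
    (hmin : ∀ q : ℝ × ℝ → ℝ, IsP2 q → LS h z u p ≤ LS h z u q) :
    pdy (pdy p) z = (u 3 - 2 * u 0 + u 6) / h ^ 2 := by
  obtain ⟨a, b, c, d, e, f, hpf⟩ := hp
  have hne : h ≠ 0 := ne_of_gt hh
  -- the residual combination
  set r : ℝ := (p (z + ((0:ℝ), h)) - u 3) - 2 * (p z - u 0) + (p (z - ((0:ℝ), h)) - u 6) with hr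
  set t : ℝ := -(r / 6) with ht
  -- perturbation
  set φ : ℝ × ℝ → ℝ := fun w =>
    -2 + (2 * (w.1 - z.1) ^ 2 - 3 * (w.1 - z.1) * (w.2 - z.2) + 3 * (w.2 - z.2) ^ 2) / h ^ 2
    with hφ
  have hq : IsP2 (fun w => p w + t * φ w) := by
    refine ⟨a + t * (-2 + (2 * z.1 ^ 2 - 3 * z.1 * z.2 + 3 * z.2 ^ 2) / h ^ 2),
      b + t * ((-4 * z.1 + 3 * z.2) / h ^ 2),
      c + t * ((3 * z.1 - 6 * z.2) / h ^ 2),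
      d + t * (2 / h ^ 2), e + t * (-3 / h ^ 2), f + t * (3 / h ^ 2), fun w => ?_⟩
    simp only [hpf w, hφ]
    field_simp
    ring
  have hh2 : (h : ℝ) ^ 2 ≠ 0 := pow_ne_zero 2 hne
  have e0 : φ z = -2 := by simp [hφ]
  have e1 : φ (z + ((h : ℝ), 0)) = 0 := by
    simp only [hφ, Prod.fst_add, Prod.snd_add]; field_simp <;> ring
  have e2 : φ (z + ((h : ℝ), h)) = 0 := by
    simp only [hφ, Prod.fst_add, Prod.snd_add]; field_simp <;> ring
  have e3 : φ (z + ((0 : ℝ), h)) = 1 := by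
    simp only [hφ, Prod.fst_add, Prod.snd_add]; field_simp <;> ring
  have e4 : φ (z - ((h : ℝ), 0)) = 0 := by
    simp only [hφ, Prod.fst_sub, Prod.snd_sub]; field_simp <;> ring
  have e5 : φ (z - ((h : ℝ), h)) = 0 := by
    simp only [hφ, Prod.fst_sub, Prod.snd_sub]; field_simp <;> ring
  have e6 : φ (z - ((0 : ℝ), h)) = 1 := by
    simp only [hφ, Prod.fst_sub, Prod.snd_sub]; field_simp <;> ring
  have P0 : pts h z 0 = z := rfl
  have P1 : pts h z 1 = z + ((h : ℝ), 0) := rfl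
  have P2 : pts h z 2 = z + ((h : ℝ), h) := rfl
  have P3 : pts h z 3 = z + ((0 : ℝ), h) := rfl
  have P4 : pts h z 4 = z - ((h : ℝ), 0) := rfl
  have P5 : pts h z 5 = z - ((h : ℝ), h) := rfl
  have P6 : pts h z 6 = z - ((0 : ℝ), h) := rfl
  have hLSq : LS h z u (fun w => p w + t * φ w) = LS h z u p - r ^ 2 / 6 := by
    simp only [LS, Fin.sum_univ_seven, P0, P1, P2, P3, P4, P5, P6]
    rw [e0, e1, e2, e3, e4, e5, e6, hr, ht]
    ring
  have hle := hmin _ hq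
  rw [hLSq] at hle
  have hsq : r ^ 2 = 0 := by
    have hnn := sq_nonneg r
    clear_value φ t r
    linarith
  have hr0 : r = 0 := by
    have h2 : r ^ 2 = r * r := sq r
    nlinarith [hsq]
  have hval : 2 * f * h ^ 2 = u 3 - 2 * u 0 + u 6 := by
    have h3 := hpf (z + ((0:ℝ), h))
    have h0 := hpf z
    have h6 := hpf (z - ((0:ℝ), h))
    simp only [Prod.fst_add, Prod.snd_add, Prod.fst_sub, Prod.snd_sub] at h3 h6
    rw [hr, h3, h0, h6] at hr0
    ring_nf at hr0 ⊢
    linarith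
  rw [show p = (fun q : ℝ × ℝ => a + b * q.1 + c * q.2 + d * q.1 ^ 2 + e * q.1 * q.2 + f * q.2 ^ 2) from funext hpf, pdy_pdy_quad]
  field_simp
  linarith [hval]
end

section
/- Fix h > 0 and z ∈ ℝ², and let q ∈ ℙ₂ be any polynomial of total degree at most 2. If the data is sampled from q, i.e. u_j = q(z_j) for j = 0, …, 6, then q is the unique minimizer of the least-squares functional Σ_{j=0}^{6} (p(z_j) − u_j)² over ℙ₂; in particular, the recovered Hessian at z equals the exact (constant) Hessian matrix of q. -/
open Finset

/-- **Consistency of the least-squares recovery on `ℙ₂`.** If the data is sampled from a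
polynomial `q ∈ ℙ₂`, i.e. `u_j = q(z_j)`, then `q` minimizes the least-squares
functional, every minimizer in `ℙ₂` equals `q`, and in particular the recovered Hessian
at `z` (the Hessian of any minimizer) equals the exact Hessian of `q` at `z`. -/
theorem least_squares_reproduces_P2 (h : ℝ) (hh : 0 < h) (z : ℝ × ℝ)
    (q : ℝ × ℝ → ℝ) (hq : IsP2 q) (u : Fin 7 → ℝ) (hu : ∀ j : Fin 7, u j = q (pts h z j)) :
    (∀ r : ℝ × ℝ → ℝ, IsP2 r → LS h z u q ≤ LS h z u r) ∧
    (∀ p : ℝ × ℝ → ℝ, IsP2 p →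
      (∀ r : ℝ × ℝ → ℝ, IsP2 r → LS h z u p ≤ LS h z u r) → p = q) ∧
    (∀ p : ℝ × ℝ → ℝ, IsP2 p →
      (∀ r : ℝ × ℝ → ℝ, IsP2 r → LS h z u p ≤ LS h z u r) →
      pdx (pdx p) z = pdx (pdx q) z ∧ pdy (pdx p) z = pdy (pdx q) z ∧
      pdx (pdy p) z = pdx (pdy q) z ∧ pdy (pdy p) z = pdy (pdy q) z) := by

  have hq0 : LS h z u q = 0 := by
    simp [LS, hu]
  have key : ∀ p : ℝ × ℝ → ℝ, IsP2 p →
      (∀ r : ℝ × ℝ → ℝ, IsP2 r → LS h z u p ≤ LS h z u r) → p = q := by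
    intro p hp hmin
    have hle : LS h z u p ≤ 0 := hq0 ▸ hmin q hq
    have hge : 0 ≤ LS h z u p := Finset.sum_nonneg fun j _ => sq_nonneg _
    have hz0 : LS h z u p = 0 := le_antisymm hle hge
    have hpt : ∀ j : Fin 7, p (pts h z j) = q (pts h z j) := by
      intro j
      have h1 := (Finset.sum_eq_zero_iff_of_nonneg (fun j _ => sq_nonneg _)).1 hz0 j (mem_univ j)
      have h2 : p (pts h z j) - u j = 0 :=
        (pow_eq_zero_iff (by norm_num : (2 : ℕ) ≠ 0)).1 h1
      have h3 := sub_eq_zero.1 h2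
      rw [h3, hu]
    obtain ⟨a, b, c, d, e, f, hpe⟩ := hp
    obtain ⟨a', b', c', d', e', f', hqe⟩ := hq
    have eq0 : p z = q z := hpt 0
    have eq1 : p (z + (h, 0)) = q (z + (h, 0)) := hpt 1
    have eq2 : p (z + (h, h)) = q (z + (h, h)) := hpt 2
    have eq3 : p (z + (0, h)) = q (z + (0, h)) := hpt 3
    have eq4 : p (z - (h, 0)) = q (z - (h, 0)) := hpt 4
    have eq5 : p (z - (h, h)) = q (z - (h, h)) := hpt 5
    have eq6 : p (z - (0, h)) = q (z - (0, h)) := hpt 6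
    simp only [hpe, hqe, Prod.fst_add, Prod.snd_add, Prod.fst_sub, Prod.snd_sub]
      at eq0 eq1 eq2 eq3 eq4 eq5 eq6
    have hne : h ≠ 0 := ne_of_gt hh
    have hne2 : h ^ 2 ≠ 0 := pow_ne_zero 2 hne
    have hd : d = d' := by
      have h2 : d * h ^ 2 = d' * h ^ 2 := by linear_combination (eq1 + eq4 - 2 * eq0) / 2
      exact mul_right_cancel₀ hne2 h2
    have hf : f = f' := by
      have h2 : f * h ^ 2 = f' * h ^ 2 := by linear_combination (eq3 + eq6 - 2 * eq0) / 2
      exact mul_right_cancel₀ hne2 h2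
    have he : e = e' := by
      have h2 : e * h ^ 2 = e' * h ^ 2 := by
        linear_combination (eq2 + eq5 - 2 * eq0) / 2 - h ^ 2 * hd - h ^ 2 * hf
      exact mul_right_cancel₀ hne2 h2
    have hb : b = b' := by
      have h2 : b * h = b' * h := by
        linear_combination (eq1 - eq4) / 2 - 2 * z.1 * h * hd - z.2 * h * he
      exact mul_right_cancel₀ hne h2
    have hc : c = c' := by
      have h2 : c * h = c' * h := by
        linear_combination (eq3 - eq6) / 2 - 2 * z.2 * h * hf - z.1 * h * he
      exact mul_right_cancel₀ hne h2
    have ha : a = a' := by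
      linear_combination eq0 - z.1 * hb - z.2 * hc - z.1 ^ 2 * hd - z.1 * z.2 * he - z.2 ^ 2 * hf
    funext w
    rw [hpe, hqe, ha, hb, hc, hd, he, hf]
  refine ⟨?_, key, ?_⟩
  · intro r hr
    rw [hq0]
    exact Finset.sum_nonneg fun j _ => sq_nonneg _
  · intro p hp hmin
    have hpq := key p hp hmin
    subst hpq
    exact ⟨rfl, rfl, rfl, rfl⟩
end

section
/- Let z ∈ ℝ², h > 0, and let u : ℝ² → ℝ be four times continuously differentiable on an open set containing the closed ball of radius 2h centered at z. Let M ≥ 0 be such that the operator norm of the fourth derivative of u is bounded by M on that closed ball. Write u_j = u(z_j) with z₀ = z, z₁ = z+(h,0), z₂ = z+(h,h), z₃ = z+(0,h), z₄ = z−(h,0), z₅ = z−(h,h), z₆ = z−(0,h). Then the recovered mixed-derivative stencil is second-order consistent: | (2u₀ − u₁ + u₂ − u₃ − u₄ + u₅ − u₆) / (2h²) − ∂²u/∂x∂y (z) | ≤ (1/4) M h². -/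
/-!
Taylor's formula with integral remainder, applied at `z ± v`, shows that the odd-order terms
cancel in the central second difference
`δ(v) = u(z + v) + u(z - v) - 2u(z) - D²u(z)(v, v)`, so `|δ(v)| ≤ M‖v‖⁴/12`.
With `a = h e₁`, `b = h e₂` the stencil numerator is `δ(a + b) - δ(a) - δ(b) + 2D²u(z)(a, b)`
by polarization of the symmetric form `D²u(z)`, and `‖a‖ = ‖b‖ = h`, `‖a + b‖ = √2 h` bound the
error by `M h⁴ (4 + 1 + 1)/12 = M h⁴/2`.
-/

open Metric

noncomputable def e1 : EuclideanSpace ℝ (Fin 2) := EuclideanSpace.single 0 1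

noncomputable def e2 : EuclideanSpace ℝ (Fin 2) := EuclideanSpace.single 1 1

open Set intervalIntegral
open scoped Nat

section Taylor

variable {E F : Type*} [NormedAddCommGroup E] [NormedSpace ℝ E]
  [NormedAddCommGroup F] [NormedSpace ℝ F] [CompleteSpace F]

theorem norm_map_add_sub_sum_iteratedFDeriv_le {f : E → F} {x y : E} {n : ℕ} {M : ℝ}
    (hf : ∀ t ∈ Icc (0 : ℝ) 1, ContDiffAt ℝ (n + 1) f (x + t • y))
    (hM : ∀ t ∈ Icc (0 : ℝ) 1, ‖iteratedFDeriv ℝ (n + 1) f (x + t • y)‖ ≤ M) :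
    ‖f (x + y) - ∑ k ∈ Finset.range (n + 1), (k ! : ℝ)⁻¹ • iteratedFDeriv ℝ k f x (fun _ ↦ y)‖
      ≤ M * ‖y‖ ^ (n + 1) / (n + 1)! := by
  have hint : ‖∫ t in 0..1, (1 - t) ^ n • iteratedFDeriv ℝ (n + 1) f (x + t • y) (fun _ ↦ y)‖
      ≤ ∫ t in 0..1, (1 - t) ^ n * (M * ‖y‖ ^ (n + 1)) := by
    refine norm_integral_le_of_norm_le zero_le_one (.of_forall fun t ht ↦ ?_)
      (Continuous.intervalIntegrable (by fun_prop) _ _)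
    rw [norm_smul, norm_pow, Real.norm_of_nonneg (sub_nonneg.2 ht.2)]
    refine mul_le_mul_of_nonneg_left ?_ (pow_nonneg (sub_nonneg.2 ht.2) n)
    calc _ ≤ ‖iteratedFDeriv ℝ (n + 1) f (x + t • y)‖ * ∏ _ : Fin (n + 1), ‖y‖ :=
          ContinuousMultilinearMap.le_opNorm _ _
      _ ≤ M * ‖y‖ ^ (n + 1) := by
          rw [Finset.prod_const, Finset.card_univ, Fintype.card_fin]
          gcongr
          exact hM t (Ioc_subset_Icc_self ht)
  have hpow : ∫ t in (0 : ℝ)..1, (1 - t) ^ n = ((n : ℝ) + 1)⁻¹ := by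
    simp [integral_comp_sub_left (fun t ↦ t ^ n)]
  rw [integral_mul_const, hpow] at hint
  rw [map_add_eq_sum_add_integral_iteratedFDeriv hf, add_sub_cancel_left, norm_smul]
  calc _ ≤ ‖(n ! : ℝ)⁻¹‖ * (((n : ℝ) + 1)⁻¹ * (M * ‖y‖ ^ (n + 1))) := by gcongr
    _ = _ := by
      rw [Real.norm_of_nonneg (by positivity), Nat.factorial_succ, Nat.cast_mul]
      push_cast
      field_simp

theorem norm_map_add_sub_sum_iteratedFDeriv_le_of_closedBall {f : E → F} {s : Set E}
    {x y : E} {n : ℕ} {r M : ℝ} (hs : IsOpen s) (hf : ContDiffOn ℝ (n + 1) f s)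
    (hball : closedBall x r ⊆ s)
    (hM : ∀ z ∈ closedBall x r, ‖iteratedFDeriv ℝ (n + 1) f z‖ ≤ M) (hy : ‖y‖ ≤ r) :
    ‖f (x + y) - ∑ k ∈ Finset.range (n + 1), (k ! : ℝ)⁻¹ • iteratedFDeriv ℝ k f x (fun _ ↦ y)‖
      ≤ M * ‖y‖ ^ (n + 1) / (n + 1)! := by
  have hseg : ∀ t ∈ Icc (0 : ℝ) 1, x + t • y ∈ closedBall x r := fun t ht ↦
    (convex_closedBall x r).add_smul_mem (mem_closedBall_self ((norm_nonneg y).trans hy))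
      (by simpa using hy) ht
  exact norm_map_add_sub_sum_iteratedFDeriv_le
    (fun t ht ↦ hf.contDiffAt (hs.mem_nhds (hball (hseg t ht)))) (fun t ht ↦ hM _ (hseg t ht))

theorem norm_central_second_difference_sub_le {f : E → F} {s : Set E} {x y : E}
    {r M : ℝ} (hs : IsOpen s) (hf : ContDiffOn ℝ 4 f s) (hball : closedBall x r ⊆ s)
    (hM : ∀ z ∈ closedBall x r, ‖iteratedFDeriv ℝ 4 f z‖ ≤ M) (hy : ‖y‖ ≤ r) :
    ‖f (x + y) + f (x - y) - 2 • f x - fderiv ℝ (fderiv ℝ f) x y y‖ ≤ M * ‖y‖ ^ 4 / 12 := by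
  have hplus := norm_map_add_sub_sum_iteratedFDeriv_le_of_closedBall (n := 3) hs hf hball hM hy
  have hminus := norm_map_add_sub_sum_iteratedFDeriv_le_of_closedBall (n := 3) (y := -y)
    hs hf hball hM (by rwa [norm_neg])
  rw [norm_neg, ← sub_eq_add_neg] at hminus
  have hneg : ∀ k, iteratedFDeriv ℝ k f x (fun _ ↦ -y)
      = (-1 : ℝ) ^ k • iteratedFDeriv ℝ k f x (fun _ ↦ y) := by
    intro k
    simpa using (iteratedFDeriv ℝ k f x).map_smul_univ (fun _ ↦ (-1 : ℝ)) (fun _ ↦ y)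
  have hsplit : f (x + y) + f (x - y) - 2 • f x - fderiv ℝ (fderiv ℝ f) x y y
      = (f (x + y) - ∑ k ∈ Finset.range 4, (k ! : ℝ)⁻¹ • iteratedFDeriv ℝ k f x (fun _ ↦ y))
        + (f (x - y) - ∑ k ∈ Finset.range 4,
            (k ! : ℝ)⁻¹ • iteratedFDeriv ℝ k f x (fun _ ↦ -y)) := by
    simp only [hneg, Finset.sum_range_succ, Finset.sum_range_zero, iteratedFDeriv_zero_apply,
      iteratedFDeriv_two_apply]
    norm_num [Nat.factorial]
    module
  rw [hsplit]
  calc _ ≤ _ := norm_add_le _ _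
    _ ≤ _ + _ := add_le_add hplus hminus
    _ = M * ‖y‖ ^ 4 / 12 := by norm_num [Nat.factorial]; ring

end Taylor

theorem IsSymmSndFDerivAt.fderiv_fderiv_add_add {𝕜 E F : Type*} [NontriviallyNormedField 𝕜]
    [NormedAddCommGroup E] [NormedSpace 𝕜 E] [NormedAddCommGroup F] [NormedSpace 𝕜 F]
    {f : E → F} {x : E} (hf : IsSymmSndFDerivAt 𝕜 f x) (a b : E) :
    fderiv 𝕜 (fderiv 𝕜 f) x (a + b) (a + b)
      = fderiv 𝕜 (fderiv 𝕜 f) x a a + fderiv 𝕜 (fderiv 𝕜 f) x b b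
        + 2 • fderiv 𝕜 (fderiv 𝕜 f) x a b := by
  simp only [map_add, add_apply, hf.eq b a]
  abel

theorem fderiv_clm_apply_const_apply {𝕜 E F G : Type*} [NontriviallyNormedField 𝕜]
    [NormedAddCommGroup E] [NormedSpace 𝕜 E] [NormedAddCommGroup F] [NormedSpace 𝕜 F]
    [NormedAddCommGroup G] [NormedSpace 𝕜 G] {c : E → F →L[𝕜] G} {x : E}
    (hc : DifferentiableAt 𝕜 c x) (v : F) (w : E) :
    fderiv 𝕜 (fun y ↦ c y v) x w = fderiv 𝕜 c x w v := by
  simp [fderiv_clm_apply hc (differentiableAt_const v)]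

theorem norm_smul_e1 (h : ℝ) : ‖h • e1‖ = |h| := by
  simp [e1, norm_smul]

theorem norm_smul_e2 (h : ℝ) : ‖h • e2‖ = |h| := by
  simp [e2, norm_smul]

theorem norm_smul_e1_add_smul_e2_pow_four (h : ℝ) : ‖h • e1 + h • e2‖ ^ 4 = 4 * h ^ 4 := by
  have hsq : ‖h • e1 + h • e2‖ ^ 2 = 2 * h ^ 2 := by
    rw [norm_add_sq_real, norm_smul_e1, norm_smul_e2, sq_abs]
    simp [e1, e2, inner_smul_left, inner_smul_right, EuclideanSpace.inner_single_left]
    ring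
  rw [show 4 = 2 * 2 from rfl, pow_mul, hsq]
  ring

theorem mixed_stencil_consistency_general (z : EuclideanSpace ℝ (Fin 2)) (h M : ℝ)
    (hh : 0 < h) (u : EuclideanSpace ℝ (Fin 2) → ℝ)
    (s : Set (EuclideanSpace ℝ (Fin 2))) (hs : IsOpen s)
    (hball : closedBall z (2 * h) ⊆ s) (hu : ContDiffOn ℝ 4 u s)
    (hbound : ∀ x ∈ closedBall z (2 * h), ‖iteratedFDeriv ℝ 4 u x‖ ≤ M) :
    |(2 * u z - u (z + h • e1) + u (z + h • e1 + h • e2) - u (z + h • e2)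
        - u (z - h • e1) + u (z - h • e1 - h • e2) - u (z - h • e2)) / (2 * h ^ 2)
      - fderiv ℝ (fun x => fderiv ℝ u x e2) z e1|
    ≤ (1 / 4) * M * h ^ 2 := by
  have hu4 : ContDiffAt ℝ 4 u z :=
    hu.contDiffAt (hs.mem_nhds (hball (mem_closedBall_self (by positivity))))
  have hpolar : fderiv ℝ (fderiv ℝ u) z (h • e1 + h • e2) (h • e1 + h • e2)
      - fderiv ℝ (fderiv ℝ u) z (h • e1) (h • e1) - fderiv ℝ (fderiv ℝ u) z (h • e2) (h • e2)
      = 2 * h ^ 2 * fderiv ℝ (fun x => fderiv ℝ u x e2) z e1 := by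
    rw [(hu4.isSymmSndFDerivAt (by norm_num)).fderiv_fderiv_add_add, fderiv_clm_apply_const_apply
      ((hu4.fderiv_right (m := 1) (by norm_num)).differentiableAt (by norm_num))]
    simp only [map_smul, smul_apply, smul_eq_mul, nsmul_eq_mul]
    ring
  have hcentral : ∀ v, ‖v‖ ≤ 2 * h →
      |u (z + v) + u (z - v) - 2 * u z - fderiv ℝ (fderiv ℝ u) z v v| ≤ M * ‖v‖ ^ 4 / 12 :=
    fun v hv ↦ by
      simpa only [nsmul_eq_mul, Nat.cast_ofNat, Real.norm_eq_abs] using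
        norm_central_second_difference_sub_le hs hu hball hbound hv
  have hn1 : ‖h • e1‖ = h := by rw [norm_smul_e1, abs_of_pos hh]
  have hn2 : ‖h • e2‖ = h := by rw [norm_smul_e2, abs_of_pos hh]
  have hA := abs_le.1 <| hcentral (h • e1) (by linarith)
  have hB := abs_le.1 <| hcentral (h • e2) (by linarith)
  have hAB := abs_le.1 <| hcentral (h • e1 + h • e2) (by linarith [norm_add_le (h • e1) (h • e2)])
  rw [hn1] at hA
  rw [hn2] at hB
  rw [norm_smul_e1_add_smul_e2_pow_four, ← add_assoc, sub_add_eq_sub_sub] at hAB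
  rw [div_sub' (by positivity), abs_div, abs_of_pos (by positivity : (0 : ℝ) < 2 * h ^ 2),
    div_le_iff₀ (by positivity), abs_le]
  constructor <;> linarith [hA.1, hA.2, hB.1, hB.2, hAB.1, hAB.2]

/-- **Second-order consistency of the recovered mixed-derivative stencil.** With the
seven sampling points `z₀ = z`, `z₁ = z+(h,0)`, `z₂ = z+(h,h)`, `z₃ = z+(0,h)`,
`z₄ = z−(h,0)`, `z₅ = z−(h,h)`, `z₆ = z−(0,h)` and `u_j = u(z_j)`, if `u` is `C⁴` on an
open set containing the closed ball of radius `2h` around `z` with fourth derivative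
bounded in operator norm by `M` there, then
`|(2u₀ − u₁ + u₂ − u₃ − u₄ + u₅ − u₆)/(2h²) − ∂²u/∂x∂y(z)| ≤ (1/4)Mh²`. -/
theorem mixed_stencil_consistency (z : EuclideanSpace ℝ (Fin 2)) (h M : ℝ)
    (hh : 0 < h) (hM : 0 ≤ M) (u : EuclideanSpace ℝ (Fin 2) → ℝ)
    (s : Set (EuclideanSpace ℝ (Fin 2))) (hs : IsOpen s)
    (hball : closedBall z (2 * h) ⊆ s) (hu : ContDiffOn ℝ 4 u s)
    (hbound : ∀ x ∈ closedBall z (2 * h), ‖iteratedFDeriv ℝ 4 u x‖ ≤ M) :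
    |(2 * u z - u (z + h • e1) + u (z + h • e1 + h • e2) - u (z + h • e2)
        - u (z - h • e1) + u (z - h • e1 - h • e2) - u (z - h • e2)) / (2 * h ^ 2)
      - fderiv ℝ (fun x => fderiv ℝ u x e2) z e1|
    ≤ (1 / 4) * M * h ^ 2 :=
  mixed_stencil_consistency_general z h M hh u s hs hball hu hbound
end
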